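/- arXiv:2304.14215 — 2 statements merged into one kernel-verified Lean document; each statement's English description precedes it below -/
import Mathlib

section
/- For 1 < p < N, the identity ∫_{ℝ^N} |y|^{p/(p-1)} (1+|y|^{p/(p-1)})^{N/p−N−2} dy = (N(p-1)/p) ∫_{ℝ^N} (1+|y|^{p/(p-1)})^{N/p−N−2} dy holds, both integrals being finite. -/
/-!
With `q = p / (p - 1)` and `α = N / p - N - 2`, polar coordinates turn the two integrals into
`c_N ∫₀^∞ r ^ (N - 1 + q) (1 + r ^ q) ^ α dr` and `c_N ∫₀^∞ r ^ (N - 1) (1 + r ^ q) ^ α dr`.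
Because `N + q (α + 1) = -q`, the derivative of `r ^ N (1 + r ^ q) ^ (α + 1)` is
`N r ^ (N - 1) (1 + r ^ q) ^ α - q r ^ (N - 1 + q) (1 + r ^ q) ^ α`. That function vanishes at `0`
and at `∞`, so the first radial integral is `N / q = N (p - 1) / p` times the second.
-/

open MeasureTheory Real Filter Set Topology Module

lemma rpow_mul_one_add_rpow_rpow_le {r : ℝ} (hr : 0 < r) (s q : ℝ) {β : ℝ} (hβ : β ≤ 0) :
    r ^ s * (1 + r ^ q) ^ β ≤ r ^ (s + q * β) := by
  calc r ^ s * (1 + r ^ q) ^ β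
      ≤ r ^ s * (r ^ q) ^ β := by
        gcongr ?_ * ?_
        exact rpow_le_rpow_of_nonpos (by positivity) (by linarith) hβ
    _ = r ^ (s + q * β) := by rw [← rpow_mul hr.le, rpow_add hr]

lemma integrableOn_Ioi_rpow_mul_one_add_rpow_rpow {s q α : ℝ} (hs : -1 < s) (hα : α ≤ 0)
    (hdecay : s + q * α < -1) :
    IntegrableOn (fun r : ℝ => r ^ s * (1 + r ^ q) ^ α) (Ioi 0) := by
  have hmeas : AEStronglyMeasurable (fun r : ℝ => r ^ s * (1 + r ^ q) ^ α) :=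
    (by fun_prop : Measurable _).aestronglyMeasurable
  have hnear : IntegrableOn (fun r : ℝ => r ^ s * (1 + r ^ q) ^ α) (Ioc 0 1) := by
    have hdom : IntegrableOn (fun r : ℝ => r ^ s) (Ioc 0 1) :=
      (intervalIntegrable_iff_integrableOn_Ioc_of_le zero_le_one).1
        (intervalIntegral.intervalIntegrable_rpow' hs)
    refine hdom.mono' hmeas.restrict ?_
    filter_upwards [ae_restrict_mem measurableSet_Ioc] with r hr
    have hr : 0 < r := hr.1
    rw [norm_of_nonneg (by positivity)]
    exact mul_le_of_le_one_right (by positivity)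
      (rpow_le_one_of_one_le_of_nonpos (by simp [rpow_nonneg hr.le]) hα)
  have hfar : IntegrableOn (fun r : ℝ => r ^ s * (1 + r ^ q) ^ α) (Ioi 1) := by
    refine (integrableOn_Ioi_rpow_of_lt hdecay one_pos).mono' hmeas.restrict ?_
    filter_upwards [ae_restrict_mem measurableSet_Ioi] with r hr
    have hr : (0 : ℝ) < r := one_pos.trans hr
    rw [norm_of_nonneg (by positivity)]
    exact rpow_mul_one_add_rpow_rpow_le hr s q hα
  rw [← Ioc_union_Ioi_eq_Ioi zero_le_one]
  exact hnear.union hfar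

lemma tendsto_rpow_mul_one_add_rpow_rpow_atTop {n q β : ℝ} (hβ : β ≤ 0)
    (hdecay : n + q * β < 0) :
    Tendsto (fun r : ℝ => r ^ n * (1 + r ^ q) ^ β) atTop (𝓝 0) := by
  have hlim : Tendsto (fun r : ℝ => r ^ (n + q * β)) atTop (𝓝 0) := by
    simpa using tendsto_rpow_neg_atTop (neg_pos.2 hdecay)
  refine tendsto_of_tendsto_of_tendsto_of_le_of_le' tendsto_const_nhds hlim ?_ ?_
  · filter_upwards [eventually_gt_atTop 0] with r hr
    positivity
  · filter_upwards [eventually_gt_atTop 0] with r hr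
    exact rpow_mul_one_add_rpow_rpow_le hr n q hβ

lemma hasDerivAt_rpow_mul_one_add_rpow_rpow {r : ℝ} (hr : 0 < r) (n q α : ℝ) :
    HasDerivAt (fun r : ℝ => r ^ n * (1 + r ^ q) ^ (α + 1))
      (n * (r ^ (n - 1) * (1 + r ^ q) ^ α)
        + (n + q * (α + 1)) * (r ^ (n - 1 + q) * (1 + r ^ q) ^ α)) r := by
  have hpos : 0 < 1 + r ^ q := by positivity
  have hbase : HasDerivAt (fun r : ℝ => 1 + r ^ q) (q * r ^ (q - 1)) r :=
    (hasDerivAt_rpow_const (Or.inl hr.ne')).const_add 1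
  refine ((hasDerivAt_rpow_const (p := n) (Or.inl hr.ne')).mul
    (hbase.rpow_const (p := α + 1) (Or.inl hpos.ne'))).congr_deriv ?_
  rw [add_sub_cancel_right, rpow_add hpos, rpow_one, rpow_add hr, rpow_sub_one hr.ne',
    rpow_sub_one hr.ne']
  field_simp
  ring

theorem integral_Ioi_rpow_mul_one_add_rpow_rpow_shift {n q α : ℝ} (hn : 0 < n) (hq : 0 < q)
    (hdecay : n + q * (α + 1) < 0) :
    -(n + q * (α + 1)) * ∫ r in Ioi 0, r ^ (n - 1 + q) * (1 + r ^ q) ^ α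
      = n * ∫ r in Ioi 0, r ^ (n - 1) * (1 + r ^ q) ^ α := by
  have hα₁ : α + 1 ≤ 0 := by nlinarith
  have hint₀ : IntegrableOn (fun r : ℝ => r ^ (n - 1) * (1 + r ^ q) ^ α) (Ioi 0) :=
    integrableOn_Ioi_rpow_mul_one_add_rpow_rpow (by linarith) (by linarith) (by linarith)
  have hint₁ : IntegrableOn (fun r : ℝ => r ^ (n - 1 + q) * (1 + r ^ q) ^ α) (Ioi 0) :=
    integrableOn_Ioi_rpow_mul_one_add_rpow_rpow (by linarith) (by linarith) (by linarith)
  have hcont : ContinuousWithinAt (fun r : ℝ => r ^ n * (1 + r ^ q) ^ (α + 1)) (Ici 0) 0 := by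
    have hbase : ContinuousAt (fun r : ℝ => 1 + r ^ q) 0 :=
      (continuousAt_rpow_const 0 q (Or.inr hq.le)).const_add 1
    exact ((continuousAt_rpow_const 0 n (Or.inr hn.le)).mul
      (hbase.rpow_const (Or.inl (by simp [zero_rpow hq.ne'])))).continuousWithinAt
  have hibp := integral_Ioi_of_hasDerivAt_of_tendsto hcont
    (fun r hr => hasDerivAt_rpow_mul_one_add_rpow_rpow hr n q α)
    ((hint₀.const_mul n).add (hint₁.const_mul _))
    (tendsto_rpow_mul_one_add_rpow_rpow_atTop (by linarith) hdecay)
  rw [integral_add (hint₀.const_mul n) (hint₁.const_mul _), integral_const_mul,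
    integral_const_mul, zero_rpow hn.ne'] at hibp
  linarith

section Radial

variable {E : Type*} [NormedAddCommGroup E] [NormedSpace ℝ E] [Nontrivial E]
  [FiniteDimensional ℝ E]

lemma eqOn_pow_finrank_sub_one_mul (f : ℝ → ℝ) :
    EqOn (fun r : ℝ => r ^ (finrank ℝ E - 1) • f r)
      (fun r => r ^ ((finrank ℝ E : ℝ) - 1) * f r) (Ioi 0) := by
  intro r _
  simp only [smul_eq_mul]
  rw [← rpow_natCast, Nat.cast_sub finrank_pos, Nat.cast_one]

variable [MeasurableSpace E] [BorelSpace E] (μ : Measure E) [μ.IsAddHaarMeasure]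

lemma integrable_fun_norm_iff_integrableOn_rpow {f : ℝ → ℝ} :
    Integrable (fun x => f ‖x‖) μ ↔
      IntegrableOn (fun r : ℝ => r ^ ((finrank ℝ E : ℝ) - 1) * f r) (Ioi 0) := by
  rw [integrable_fun_norm_addHaar μ (f := f)]
  exact integrableOn_congr_fun (eqOn_pow_finrank_sub_one_mul f) measurableSet_Ioi

lemma integral_fun_norm_eq_integral_rpow (f : ℝ → ℝ) :
    ∫ x, f ‖x‖ ∂μ = finrank ℝ E * μ.real (Metric.ball 0 1) *
      ∫ r in Ioi 0, r ^ ((finrank ℝ E : ℝ) - 1) * f r := by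
  rw [integral_fun_norm_addHaar μ f, setIntegral_congr_fun measurableSet_Ioi
    (eqOn_pow_finrank_sub_one_mul f), nsmul_eq_mul, smul_eq_mul, mul_assoc]

end Radial

/-- for `1 < p < N`,
`∫ |y|^{p/(p-1)} (1+|y|^{p/(p-1)})^{N/p-N-2} dy
  = (N(p-1)/p) ∫ (1+|y|^{p/(p-1)})^{N/p-N-2} dy`, both integrals being finite. -/
theorem pohozaev_weight_identity (N : ℕ) (p : ℝ) (hp : 1 < p) (hpN : p < N) :
    Integrable (fun y : EuclideanSpace ℝ (Fin N) =>
        ‖y‖ ^ (p / (p - 1)) * (1 + ‖y‖ ^ (p / (p - 1))) ^ ((N : ℝ) / p - N - 2)) ∧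
    Integrable (fun y : EuclideanSpace ℝ (Fin N) =>
        (1 + ‖y‖ ^ (p / (p - 1))) ^ ((N : ℝ) / p - N - 2)) ∧
    (∫ y : EuclideanSpace ℝ (Fin N),
        ‖y‖ ^ (p / (p - 1)) * (1 + ‖y‖ ^ (p / (p - 1))) ^ ((N : ℝ) / p - N - 2)) =
      ((N : ℝ) * (p - 1) / p) *
        ∫ y : EuclideanSpace ℝ (Fin N),
          (1 + ‖y‖ ^ (p / (p - 1))) ^ ((N : ℝ) / p - N - 2) := by
  set q := p / (p - 1) with hq_def
  set α := (N : ℝ) / p - N - 2 with hα_def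
  have hq : 0 < q := div_pos (by linarith) (by linarith)
  have hdecay : (N : ℝ) + q * (α + 1) = -q := by
    rw [hq_def, hα_def]
    field_simp [show p - 1 ≠ 0 by linarith]
    ring
  have hN : (0 : ℝ) < N := by linarith
  have : Nontrivial (EuclideanSpace ℝ (Fin N)) :=
    Module.nontrivial_of_finrank_pos (R := ℝ) (by simpa using hN)
  have hshift : EqOn (fun r : ℝ => r ^ ((N : ℝ) - 1) * (r ^ q * (1 + r ^ q) ^ α))
      (fun r => r ^ ((N : ℝ) - 1 + q) * (1 + r ^ q) ^ α) (Ioi 0) := fun r hr => by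
    dsimp only
    rw [rpow_add (show (0 : ℝ) < r from hr), mul_assoc]
  have hibp := integral_Ioi_rpow_mul_one_add_rpow_rpow_shift (α := α) hN hq (by linarith)
  rw [hdecay, neg_neg] at hibp
  have hα : α ≤ 0 := by nlinarith
  refine ⟨?_, ?_, ?_⟩
  · rw [integrable_fun_norm_iff_integrableOn_rpow volume (f := fun r => r ^ q * (1 + r ^ q) ^ α),
      finrank_euclideanSpace_fin, integrableOn_congr_fun hshift measurableSet_Ioi]
    exact integrableOn_Ioi_rpow_mul_one_add_rpow_rpow (by linarith) hα (by linarith)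
  · rw [integrable_fun_norm_iff_integrableOn_rpow volume (f := fun r => (1 + r ^ q) ^ α),
      finrank_euclideanSpace_fin]
    exact integrableOn_Ioi_rpow_mul_one_add_rpow_rpow (by linarith) hα (by linarith)
  · rw [integral_fun_norm_eq_integral_rpow volume (fun r => r ^ q * (1 + r ^ q) ^ α),
      integral_fun_norm_eq_integral_rpow volume (fun r => (1 + r ^ q) ^ α),
      finrank_euclideanSpace_fin, setIntegral_congr_fun measurableSet_Ioi hshift,
      eq_div_of_mul_eq hq.ne' ((mul_comm _ _).trans hibp), hq_def]
    field_simp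
end

section
/- For 1 < p < N, the integral ∫_{ℝ^N} (|y|^{p/(p-1)} − (p−1)) (1+|y|^{p/(p-1)})^{−(N+2−N/p)} dy equals ((N−p)(p−1)/p) ∫_{ℝ^N} (1+|y|^{p/(p-1)})^{N/p−N−2} dy, and in particular is strictly positive. -/
/-! In polar coordinates both integrals become one-dimensional integrals
`I_b = ∫₀^∞ r^{N-1} (1 + r^q)^{-b} dr` with `q = p/(p-1)`. Integrating the derivative of
`r^N (1 + r^q)^{-b}` over `(0, ∞)` gives the recurrence `(qb - N) I_b = qb I_{b+1}`, and for
`b = N + 1 - N/p` one has `qb = N + q`, so `I_b = b I_{b+1}`. Since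
`(r^q - (p-1)) (1 + r^q)^{-(b+1)} = (1 + r^q)^{-b} - p (1 + r^q)^{-(b+1)}`, the left-hand side is
`(b - p)` times the integral on the right, and `b - p = (N-p)(p-1)/p > 0`. -/

open MeasureTheory Real Set Filter Topology Module

section Radial

variable {q b : ℝ}

lemma sub_mul_one_add_rpow_neg_add_one {x : ℝ} (hx : 1 + x ≠ 0) (b c : ℝ) :
    (x - (c - 1)) * (1 + x) ^ (-(b + 1)) = (1 + x) ^ (-b) - c * (1 + x) ^ (-(b + 1)) := by
  rw [show -b = -(b + 1) + 1 by ring, rpow_add_one hx]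
  ring

lemma pow_mul_one_add_rpow_neg_le (n : ℕ) (hb : 0 ≤ b) {r : ℝ} (hr : 0 < r) :
    r ^ n * (1 + r ^ q) ^ (-b) ≤ r ^ ((n : ℝ) - q * b) := by
  have hrq : 0 < r ^ q := by positivity
  calc r ^ n * (1 + r ^ q) ^ (-b) ≤ r ^ n * (r ^ q) ^ (-b) := by
        have hmono : (1 + r ^ q) ^ (-b) ≤ (r ^ q) ^ (-b) :=
          rpow_le_rpow_of_nonpos hrq (le_add_of_nonneg_left zero_le_one) (neg_nonpos.2 hb)
        exact mul_le_mul_of_nonneg_left hmono (by positivity)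
    _ = r ^ ((n : ℝ) - q * b) := by
        rw [← rpow_mul hr.le, ← rpow_natCast, ← rpow_add hr]
        ring_nf

lemma continuousOn_pow_mul_one_add_rpow_neg (n : ℕ) (hq : 0 ≤ q) (b : ℝ) :
    ContinuousOn (fun r : ℝ => r ^ n * (1 + r ^ q) ^ (-b)) (Ici 0) :=
  (continuous_pow n).continuousOn.mul <|
    (continuous_const.add (continuous_rpow_const hq)).continuousOn.rpow_const
      fun r (hr : 0 ≤ r) => Or.inl (by positivity : 1 + r ^ q ≠ 0)

lemma integrableOn_pow_mul_one_add_rpow_neg {n : ℕ} (hq : 0 ≤ q) (hnb : (n : ℝ) + 1 < q * b) :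
    IntegrableOn (fun r : ℝ => r ^ n * (1 + r ^ q) ^ (-b)) (Ioi 0) := by
  have hb : 0 ≤ b := pos_of_mul_pos_right ((by positivity : (0 : ℝ) < n + 1).trans hnb) hq |>.le
  have hcont := continuousOn_pow_mul_one_add_rpow_neg n hq b
  have hnear : IntegrableOn (fun r : ℝ => r ^ n * (1 + r ^ q) ^ (-b)) (Icc 0 1) :=
    (hcont.mono Icc_subset_Ici_self).integrableOn_Icc
  have htail : IntegrableOn (fun r : ℝ => r ^ n * (1 + r ^ q) ^ (-b)) (Ioi 1) := by
    refine (integrableOn_Ioi_rpow_of_lt (a := (n : ℝ) - q * b) (by linarith) one_pos).mono'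
      ((hcont.mono (Ioi_subset_Ici zero_le_one)).aestronglyMeasurable measurableSet_Ioi) ?_
    refine ae_restrict_of_forall_mem measurableSet_Ioi fun r (hr : 1 < r) => ?_
    have hr0 : 0 < r := one_pos.trans hr
    rw [norm_of_nonneg (by positivity)]
    exact pow_mul_one_add_rpow_neg_le n hb hr0
  exact (hnear.union htail).mono_set fun r (hr : 0 < r) =>
    (le_or_gt r 1).imp (fun h => ⟨hr.le, h⟩) id

lemma tendsto_pow_mul_one_add_rpow_neg_atTop {n : ℕ} (hq : 0 ≤ q) (hnb : (n : ℝ) < q * b) :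
    Tendsto (fun r : ℝ => r ^ n * (1 + r ^ q) ^ (-b)) atTop (𝓝 0) := by
  have hb : 0 ≤ b := pos_of_mul_pos_right (n.cast_nonneg.trans_lt hnb) hq |>.le
  have hdecay := tendsto_rpow_neg_atTop (sub_pos.2 hnb)
  rw [neg_sub] at hdecay
  refine tendsto_of_tendsto_of_tendsto_of_le_of_le' tendsto_const_nhds hdecay ?_ ?_
  · filter_upwards [eventually_gt_atTop 0] with r hr
    positivity
  · filter_upwards [eventually_gt_atTop 0] with r hr
    exact pow_mul_one_add_rpow_neg_le n hb hr

lemma hasDerivAt_pow_mul_one_add_rpow_neg {N : ℕ} (hN : 1 ≤ N) (q b : ℝ) {r : ℝ} (hr : 0 < r) :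
    HasDerivAt (fun r : ℝ => r ^ N * (1 + r ^ q) ^ (-b))
      ((N - q * b) * (r ^ (N - 1) * (1 + r ^ q) ^ (-b)) +
        q * b * (r ^ (N - 1) * (1 + r ^ q) ^ (-(b + 1)))) r := by
  have hs : 1 + r ^ q ≠ 0 := by positivity
  have hderiv := (hasDerivAt_pow N r).mul
    (((hasDerivAt_rpow_const (p := q) (Or.inl hr.ne')).const_add 1).rpow_const (p := -b)
      (Or.inl hs))
  refine hderiv.congr_deriv ?_
  have hpow : r ^ N = r ^ (N - 1) * r := by rw [← pow_succ, Nat.sub_add_cancel hN]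
  have hrpow : r * r ^ (q - 1) = r ^ q := by
    rw [mul_comm, ← rpow_add_one hr.ne', sub_add_cancel]
  rw [show -b - 1 = -(b + 1) by ring, show -b = -(b + 1) + 1 by ring, rpow_add_one hs, hpow]
  linear_combination (-(q * b) * r ^ (N - 1) * (1 + r ^ q) ^ (-(b + 1))) * hrpow

lemma integral_pow_mul_one_add_rpow_neg_recurrence {N : ℕ} (hN : 1 ≤ N) (hq : 0 < q)
    (hNb : (N : ℝ) < q * b) :
    (q * b - N) * ∫ r in Ioi 0, r ^ (N - 1) * (1 + r ^ q) ^ (-b) =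
      q * b * ∫ r in Ioi 0, r ^ (N - 1) * (1 + r ^ q) ^ (-(b + 1)) := by
  have hN' : ((N - 1 : ℕ) : ℝ) + 1 = N := by rw [Nat.cast_sub hN]; ring
  have hint : IntegrableOn (fun r : ℝ => r ^ (N - 1) * (1 + r ^ q) ^ (-b)) (Ioi 0) :=
    integrableOn_pow_mul_one_add_rpow_neg hq.le (by rwa [hN'])
  have hint' : IntegrableOn (fun r : ℝ => r ^ (N - 1) * (1 + r ^ q) ^ (-(b + 1))) (Ioi 0) :=
    integrableOn_pow_mul_one_add_rpow_neg hq.le (by rw [hN']; nlinarith)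
  have hFTC := integral_Ioi_of_hasDerivAt_of_tendsto
    ((continuousOn_pow_mul_one_add_rpow_neg N hq.le b).continuousWithinAt self_mem_Ici)
    (fun r (hr : 0 < r) => hasDerivAt_pow_mul_one_add_rpow_neg hN q b hr)
    ((hint.const_mul _).add (hint'.const_mul _))
    (tendsto_pow_mul_one_add_rpow_neg_atTop hq.le hNb)
  rw [integral_add (hint.const_mul _) (hint'.const_mul _), integral_const_mul,
    integral_const_mul, zero_pow (by omega), zero_mul, sub_zero] at hFTC
  linarith

end Radial

section HaarMeasure

variable {E : Type*} [NormedAddCommGroup E] [NormedSpace ℝ E] [FiniteDimensional ℝ E]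
  [MeasurableSpace E] [BorelSpace E] [Nontrivial E] (μ : Measure E) [μ.IsAddHaarMeasure]
  {q b : ℝ}

lemma integrable_one_add_norm_rpow_neg (hq : 0 ≤ q) (hb : (finrank ℝ E : ℝ) < q * b) :
    Integrable (fun y : E => (1 + ‖y‖ ^ q) ^ (-b)) μ := by
  rw [integrable_fun_norm_addHaar μ (f := fun r => (1 + r ^ q) ^ (-b))]
  refine integrableOn_pow_mul_one_add_rpow_neg hq ?_
  rwa [Nat.cast_sub finrank_pos, Nat.cast_one, sub_add_cancel]

lemma integral_one_add_norm_rpow_neg_pos (hq : 0 ≤ q) (hb : (finrank ℝ E : ℝ) < q * b) :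
    0 < ∫ y, (1 + ‖y‖ ^ q) ^ (-b) ∂μ := by
  rw [integral_pos_iff_support_of_nonneg (fun y => by positivity)
    (integrable_one_add_norm_rpow_neg μ hq hb)]
  have hsupport : Function.support (fun y : E => (1 + ‖y‖ ^ q) ^ (-b)) = univ :=
    Function.support_eq_univ fun y => by positivity
  rw [hsupport]
  exact Measure.measure_univ_pos.2 (NeZero.ne μ)

lemma integral_one_add_norm_rpow_neg_recurrence (hq : 0 < q) (hb : (finrank ℝ E : ℝ) < q * b) :
    (q * b - finrank ℝ E) * ∫ y, (1 + ‖y‖ ^ q) ^ (-b) ∂μ =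
      q * b * ∫ y, (1 + ‖y‖ ^ q) ^ (-(b + 1)) ∂μ := by
  rw [integral_fun_norm_addHaar μ (fun r => (1 + r ^ q) ^ (-b)),
    integral_fun_norm_addHaar μ (fun r => (1 + r ^ q) ^ (-(b + 1)))]
  simp only [smul_eq_mul, nsmul_eq_mul]
  linear_combination (finrank ℝ E * μ.real (Metric.ball 0 1)) *
    integral_pow_mul_one_add_rpow_neg_recurrence finrank_pos hq hb

lemma integral_norm_rpow_sub_mul_one_add_norm_rpow_neg (hq : 0 < q)
    (hb : q * b = finrank ℝ E + q) (c : ℝ) :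
    ∫ y, (‖y‖ ^ q - (c - 1)) * (1 + ‖y‖ ^ q) ^ (-(b + 1)) ∂μ =
      (b - c) * ∫ y, (1 + ‖y‖ ^ q) ^ (-(b + 1)) ∂μ := by
  have hdim : (finrank ℝ E : ℝ) < q * b := by linarith
  have hrec : ∫ y, (1 + ‖y‖ ^ q) ^ (-b) ∂μ = b * ∫ y, (1 + ‖y‖ ^ q) ^ (-(b + 1)) ∂μ := by
    have h := integral_one_add_norm_rpow_neg_recurrence μ hq hdim
    rw [hb, add_sub_cancel_left, ← hb, mul_assoc] at h
    exact mul_left_cancel₀ hq.ne' h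
  have hint := integrable_one_add_norm_rpow_neg μ hq.le hdim
  have hint' := integrable_one_add_norm_rpow_neg μ hq.le (b := b + 1) (by nlinarith)
  rw [integral_congr_ae (Eventually.of_forall fun y =>
      sub_mul_one_add_rpow_neg_add_one (by positivity) b c),
    integral_sub hint (hint'.const_mul c), integral_const_mul, hrec, sub_mul]

end HaarMeasure

/-- for `1 < p < N`,
`∫ (|y|^{p/(p-1)} - (p-1)) (1+|y|^{p/(p-1)})^{-(N+2-N/p)} dy
  = ((N-p)(p-1)/p) ∫ (1+|y|^{p/(p-1)})^{N/p-N-2} dy > 0`. -/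
theorem pohozaev_residue_positive (N : ℕ) (p : ℝ) (hp : 1 < p) (hpN : p < N) :
    (∫ y : EuclideanSpace ℝ (Fin N),
        (‖y‖ ^ (p / (p - 1)) - (p - 1)) *
          (1 + ‖y‖ ^ (p / (p - 1))) ^ (-((N : ℝ) + 2 - N / p))) =
      (((N : ℝ) - p) * (p - 1) / p) *
        ∫ y : EuclideanSpace ℝ (Fin N),
          (1 + ‖y‖ ^ (p / (p - 1))) ^ ((N : ℝ) / p - N - 2) ∧
    0 < ∫ y : EuclideanSpace ℝ (Fin N),
        (‖y‖ ^ (p / (p - 1)) - (p - 1)) *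
          (1 + ‖y‖ ^ (p / (p - 1))) ^ (-((N : ℝ) + 2 - N / p)) := by
  have hp1 : 0 < p - 1 := by linarith
  have : Nonempty (Fin N) := ⟨⟨0, by exact_mod_cast (zero_lt_one.trans hp).trans hpN⟩⟩
  set q := p / (p - 1) with hq_def
  set b : ℝ := N + 1 - N / p with hb_def
  have hq : 0 < q := by positivity
  have hqb : q * b = finrank ℝ (EuclideanSpace ℝ (Fin N)) + q := by
    rw [finrank_euclideanSpace_fin, hq_def, hb_def]
    field_simp
    ring
  have hcoef : b - p = ((N : ℝ) - p) * (p - 1) / p := by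
    rw [hb_def]
    field_simp
    ring
  rw [show -((N : ℝ) + 2 - N / p) = -(b + 1) by ring,
    show (N : ℝ) / p - N - 2 = -(b + 1) by ring,
    integral_norm_rpow_sub_mul_one_add_norm_rpow_neg volume hq hqb p, hcoef]
  refine ⟨rfl, mul_pos (div_pos (mul_pos (by linarith) hp1) (by linarith)) ?_⟩
  exact integral_one_add_norm_rpow_neg_pos volume hq.le (by linarith)
end
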